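/- arXiv:1405.4316 — 6 statements merged into one kernel-verified Lean document; each statement's English description precedes it below -/
import Mathlib

section
/- Let X and Y be real-valued random variables on a probability space with E(X²) < ∞ and E(Y²) < ∞. Then Cov(X, Y) = ∫_{−∞}^{∞} ∫_{−∞}^{∞} H(x, y) dx dy, where H(x, y) = P(X > x, Y > y) − P(X > x)·P(Y > y) (Hoeffding's covariance formula). -/
/-!
Write each variable in signed layer-cake form, `X = ∫ (1{x < X} - 1{x < 0}) dx`. By Fubini, the
covariance of two such mixtures is the integral of the covariances of the mixed variables, and the
covariance of `1{X > x} - c` and `1{Y > y} - d` is `P(X > x, Y > y) - P(X > x) P(Y > y)`.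
Fubini applies because `∫∫ |layer X x| |layer Y y| dx dy = |X Y|`, integrable for square
integrable `X`, `Y`.
-/

open MeasureTheory ProbabilityTheory

noncomputable def cov {Ω : Type*} [MeasurableSpace Ω] (μ : Measure Ω) (X Y : Ω → ℝ) : ℝ :=
  (∫ ω, X ω * Y ω ∂μ) - (∫ ω, X ω ∂μ) * (∫ ω, Y ω ∂μ)

open Set Function

section Covariance

variable {Ω : Type*} [MeasurableSpace Ω] {μ : Measure Ω} {X Y : Ω → ℝ}

theorem cov_eq_covariance [IsProbabilityMeasure μ] (hX : MemLp X 2 μ) (hY : MemLp Y 2 μ) :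
    cov μ X Y = covariance X Y μ :=
  (covariance_eq_sub hX hY).symm

theorem cov_indicator_sub_const [IsProbabilityMeasure μ] {s t : Set Ω} (hs : MeasurableSet s)
    (ht : MeasurableSet t) (c d : ℝ) :
    cov μ (fun ω => s.indicator (1 : Ω → ℝ) ω - c) (fun ω => t.indicator 1 ω - d) =
      μ.real (s ∩ t) - μ.real s * μ.real t := by
  have hs2 : MemLp (s.indicator (1 : Ω → ℝ)) 2 μ := (memLp_const 1).indicator hs
  have ht2 : MemLp (t.indicator (1 : Ω → ℝ)) 2 μ := (memLp_const 1).indicator ht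
  rw [cov_eq_covariance (X := fun ω => s.indicator 1 ω - c) (Y := fun ω => t.indicator 1 ω - d)
    (hs2.sub (memLp_const c)) (ht2.sub (memLp_const d)),
    covariance_sub_const_left (hs2.integrable one_le_two),
    covariance_sub_const_right (ht2.integrable one_le_two), covariance_eq_sub hs2 ht2,
    ← inter_indicator_one, integral_indicator_one hs, integral_indicator_one ht,
    integral_indicator_one (hs.inter ht)]

theorem cov_eq_integral_integral_cov [SFinite μ] {α β : Type*} [MeasurableSpace α]
    [MeasurableSpace β] {ν : Measure α} {ν' : Measure β} [SFinite ν] [SFinite ν']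
    {f : Ω → α → ℝ} {g : Ω → β → ℝ}
    (hf : Integrable (uncurry f) (μ.prod ν)) (hg : Integrable (uncurry g) (μ.prod ν'))
    (hfg : Integrable (fun p : Ω × α × β => f p.1 p.2.1 * g p.1 p.2.2) (μ.prod (ν.prod ν')))
    (hX : ∀ ω, ∫ x, f ω x ∂ν = X ω) (hY : ∀ ω, ∫ y, g ω y ∂ν' = Y ω) :
    cov μ X Y = ∫ x, ∫ y, cov μ (fun ω => f ω x) (fun ω => g ω y) ∂ν' ∂ν := by
  have hmul : ∫ ω, X ω * Y ω ∂μ = ∫ q, ∫ ω, f ω q.1 * g ω q.2 ∂μ ∂(ν.prod ν') := by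
    simp_rw [← hX, ← hY, ← integral_prod_mul]
    exact integral_integral_swap (f := fun ω (q : α × β) => f ω q.1 * g ω q.2) hfg
  have hmean : (∫ ω, X ω ∂μ) * ∫ ω, Y ω ∂μ =
      ∫ q, (∫ ω, f ω q.1 ∂μ) * ∫ ω, g ω q.2 ∂μ ∂(ν.prod ν') := by
    simp_rw [← hX, ← hY, integral_integral_swap hf, integral_integral_swap hg]
    exact (integral_prod_mul _ _).symm
  have hprod : Integrable (fun q : α × β => (∫ ω, f ω q.1 ∂μ) * ∫ ω, g ω q.2 ∂μ) (ν.prod ν') :=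
    hf.integral_prod_right.mul_prod hg.integral_prod_right
  have hcov : Integrable (fun q : α × β => cov μ (fun ω => f ω q.1) (fun ω => g ω q.2))
      (ν.prod ν') :=
    hfg.integral_prod_right.sub hprod
  rw [← integral_prod _ hcov, cov, hmul, hmean]
  exact (integral_sub hfg.integral_prod_right hprod).symm

end Covariance

noncomputable def layer (a x : ℝ) : ℝ :=
  (if x < a then 1 else 0) - (if x < 0 then 1 else 0)

namespace layer

theorem eq_indicator_of_nonneg {a : ℝ} (ha : 0 ≤ a) : layer a = (Ico 0 a).indicator 1 := by
  ext x
  simp only [layer, indicator_apply, mem_Ico, Pi.one_apply]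
  split_ifs <;> grind

theorem eq_neg_indicator_of_neg {a : ℝ} (ha : a < 0) : layer a = -(Ico a 0).indicator 1 := by
  ext x
  simp only [layer, indicator_apply, mem_Ico, Pi.one_apply, Pi.neg_apply]
  split_ifs <;> grind

theorem integrable (a : ℝ) : Integrable (layer a) := by
  rcases le_or_gt 0 a with ha | ha
  · rw [eq_indicator_of_nonneg ha]
    exact (integrable_indicator_iff measurableSet_Ico).2 (integrableOn_const measure_Ico_lt_top.ne)
  · rw [eq_neg_indicator_of_neg ha]
    exact ((integrable_indicator_iff measurableSet_Ico).2
      (integrableOn_const measure_Ico_lt_top.ne)).neg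

theorem integral (a : ℝ) : ∫ x, layer a x = a := by
  rcases le_or_gt 0 a with ha | ha
  · simp [eq_indicator_of_nonneg ha, integral_indicator_one measurableSet_Ico, ha]
  · simp [eq_neg_indicator_of_neg ha, integral_neg, integral_indicator_one measurableSet_Ico, ha.le]

theorem integral_abs (a : ℝ) : ∫ x, |layer a x| = |a| := by
  rcases le_or_gt 0 a with ha | ha
  · have h (x : ℝ) : 0 ≤ layer a x := by
      rw [eq_indicator_of_nonneg ha]; exact indicator_nonneg (fun _ _ => zero_le_one) x
    simp_rw [abs_of_nonneg (h _), integral, abs_of_nonneg ha]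
  · have h (x : ℝ) : layer a x ≤ 0 := by
      rw [eq_neg_indicator_of_neg ha, Pi.neg_apply, neg_nonpos]
      exact indicator_nonneg (fun _ _ => zero_le_one) x
    simp_rw [abs_of_nonpos (h _), integral_neg, integral, abs_of_neg ha]

theorem measurable : Measurable (uncurry layer) := by
  refine Measurable.sub ?_ ?_ <;> refine Measurable.ite ?_ measurable_const measurable_const
  · exact measurableSet_lt measurable_snd measurable_fst
  · exact measurableSet_lt measurable_snd measurable_const

end layer

section LayerCake

variable {Ω : Type*} [MeasurableSpace Ω] {μ : Measure Ω} {X Y : Ω → ℝ}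

theorem integrable_layer_comp [SFinite μ] (hX : Measurable X) (hXi : Integrable X μ) :
    Integrable (fun p : Ω × ℝ => layer (X p.1) p.2) (μ.prod volume) := by
  have hmeas : Measurable (fun p : Ω × ℝ => layer (X p.1) p.2) :=
    layer.measurable.comp ((hX.comp measurable_fst).prodMk measurable_snd)
  refine (integrable_prod_iff hmeas.aestronglyMeasurable).2
    ⟨.of_forall fun ω => layer.integrable (X ω), ?_⟩
  simpa only [Real.norm_eq_abs, layer.integral_abs] using hXi.abs

theorem integrable_layer_comp_mul_layer_comp [SFinite μ] (hX : Measurable X) (hY : Measurable Y)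
    (hXY : Integrable (X * Y) μ) :
    Integrable (fun p : Ω × ℝ × ℝ => layer (X p.1) p.2.1 * layer (Y p.1) p.2.2)
      (μ.prod (volume.prod volume)) := by
  have hmeas : Measurable (fun p : Ω × ℝ × ℝ => layer (X p.1) p.2.1 * layer (Y p.1) p.2.2) :=
    (layer.measurable.comp ((hX.comp measurable_fst).prodMk measurable_snd.fst)).mul
      (layer.measurable.comp ((hY.comp measurable_fst).prodMk measurable_snd.snd))
  refine (integrable_prod_iff hmeas.aestronglyMeasurable).2
    ⟨.of_forall fun ω => (layer.integrable (X ω)).mul_prod (layer.integrable (Y ω)), ?_⟩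
  have hnorm (ω : Ω) :
      ∫ q : ℝ × ℝ, ‖layer (X ω) q.1 * layer (Y ω) q.2‖ ∂(volume.prod volume) = |(X * Y) ω| := by
    simp only [Real.norm_eq_abs, abs_mul, Pi.mul_apply]
    rw [integral_prod_mul (fun x => |layer (X ω) x|) (fun y => |layer (Y ω) y|),
      layer.integral_abs, layer.integral_abs]
  exact hXY.abs.congr (.of_forall fun ω => (hnorm ω).symm)

theorem cov_layer_comp [IsProbabilityMeasure μ] (hX : Measurable X) (hY : Measurable Y)
    (x y : ℝ) :
    cov μ (fun ω => layer (X ω) x) (fun ω => layer (Y ω) y) =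
      (μ {ω | X ω > x ∧ Y ω > y}).toReal
        - (μ {ω | X ω > x}).toReal * (μ {ω | Y ω > y}).toReal := by
  have hlayer {Z : Ω → ℝ} {z : ℝ} : (fun ω => layer (Z ω) z) =
      fun ω => {ω | Z ω > z}.indicator 1 ω - if z < 0 then 1 else 0 := by
    ext ω
    simp [layer, indicator_apply]
  rw [hlayer, hlayer, cov_indicator_sub_const (measurableSet_lt measurable_const hX)
    (measurableSet_lt measurable_const hY)]
  rfl

end LayerCake

/-- Hoeffding's covariance formula:
`Cov(X, Y) = ∫∫ (P(X > x, Y > y) - P(X > x) P(Y > y)) dx dy`. -/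
theorem cov_eq_integral_hoeffding
    {Ω : Type*} [MeasurableSpace Ω] (μ : Measure Ω) [IsProbabilityMeasure μ]
    (X Y : Ω → ℝ) (hX : Measurable X) (hY : Measurable Y)
    (hX2 : MemLp X 2 μ) (hY2 : MemLp Y 2 μ) :
    cov μ X Y =
      ∫ x : ℝ, ∫ y : ℝ,
        ((μ {ω | X ω > x ∧ Y ω > y}).toReal
          - (μ {ω | X ω > x}).toReal * (μ {ω | Y ω > y}).toReal) := by
  rw [cov_eq_integral_integral_cov (integrable_layer_comp hX (hX2.integrable one_le_two))
    (integrable_layer_comp hY (hY2.integrable one_le_two))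
    (integrable_layer_comp_mul_layer_comp hX hY (hX2.integrable_mul hY2))
    (fun ω => layer.integral (X ω)) (fun ω => layer.integral (Y ω))]
  simp only [cov_layer_comp hX hY]
end

section
/- Let X and Y be real-valued random variables with X ≥ a and Y ≥ a almost surely for some real number a, such that E[(X−a)(Y−a)] < ∞. Then ∫_a^∞ ∫_a^∞ P(X > x, Y > y) dx dy = E[(X − a)(Y − a)]. -/
open MeasureTheory ProbabilityTheory
open scoped ENNReal

/-!
Both sides are computed as lower integrals and compared there. By the layer-cake formula shifted
to `a`, integrating `μ {x < X, y < Y}` over `y > a` gives the measure of `{x < X}` under the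
weighted measure `(Y - a) • μ`; a second layer-cake integration over `x > a` then yields
`∫ (X - a) d((Y - a) • μ) = E[(X - a)(Y - a)]`. Integrability makes every lower integral finite,
so the identity passes to Bochner integrals.
-/

section TailIntegral

variable {Ω : Type*} [MeasurableSpace Ω]

theorem antitone_measure_setOf_lt (m : Measure Ω) (Y : Ω → ℝ) :
    Antitone fun y => m {ω | y < Y ω} :=
  fun _ _ hle => measure_mono fun _ hω => hle.trans_lt hω

theorem lintegral_Ioi_measure_lt_eq_lintegral_ofReal_sub (m : Measure Ω) {Y : Ω → ℝ}
    (hY : AEMeasurable Y m) {a : ℝ} (hYa : ∀ᵐ ω ∂m, a ≤ Y ω) :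
    ∫⁻ y in Set.Ioi a, m {ω | y < Y ω} = ∫⁻ ω, ENNReal.ofReal (Y ω - a) ∂m := by
  have hshift : volume.restrict (Set.Ioi a) =
      (volume.restrict (Set.Ioi (0 : ℝ))).map (· + a) := by
    rw [← sub_self a, ← Set.preimage_add_const_Ioi, ← Measure.restrict_map
      (measurable_add_const a) measurableSet_Ioi, map_add_right_eq_self]
  rw [hshift, lintegral_map (antitone_measure_setOf_lt m Y).measurable (measurable_add_const a),
    lintegral_eq_lintegral_meas_lt m (hYa.mono fun _ h => sub_nonneg.2 h)
      (hY.sub aemeasurable_const)]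
  simp only [lt_sub_iff_add_lt]

theorem lintegral_Ioi_measure_lt_and_lt_eq_withDensity (μ : Measure Ω) {X Y : Ω → ℝ}
    (hX : Measurable X) (hY : Measurable Y) {a : ℝ} (hYa : ∀ᵐ ω ∂μ, a ≤ Y ω) (x : ℝ) :
    ∫⁻ y in Set.Ioi a, μ {ω | x < X ω ∧ y < Y ω}
      = μ.withDensity (fun ω => ENNReal.ofReal (Y ω - a)) {ω | x < X ω} := by
  have hXx : MeasurableSet {ω | x < X ω} := measurableSet_lt measurable_const hX
  have hrestrict (y : ℝ) :
      μ {ω | x < X ω ∧ y < Y ω} = μ.restrict {ω | x < X ω} {ω | y < Y ω} := by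
    rw [Measure.restrict_apply (measurableSet_lt measurable_const hY), Set.inter_comm]
    rfl
  simp_rw [hrestrict]
  rw [lintegral_Ioi_measure_lt_eq_lintegral_ofReal_sub _ hY.aemeasurable (ae_restrict_of_ae hYa),
    withDensity_apply _ hXx]

theorem lintegral_Ioi_lintegral_Ioi_measure_lt_and_lt (μ : Measure Ω) {X Y : Ω → ℝ}
    (hX : Measurable X) (hY : Measurable Y) {a : ℝ}
    (hXa : ∀ᵐ ω ∂μ, a ≤ X ω) (hYa : ∀ᵐ ω ∂μ, a ≤ Y ω) :
    ∫⁻ x in Set.Ioi a, ∫⁻ y in Set.Ioi a, μ {ω | x < X ω ∧ y < Y ω}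
      = ∫⁻ ω, ENNReal.ofReal ((X ω - a) * (Y ω - a)) ∂μ := by
  set w : Ω → ℝ≥0∞ := fun ω => ENNReal.ofReal (Y ω - a)
  simp_rw [lintegral_Ioi_measure_lt_and_lt_eq_withDensity μ hX hY hYa]
  rw [lintegral_Ioi_measure_lt_eq_lintegral_ofReal_sub _ hX.aemeasurable
      ((withDensity_absolutelyContinuous μ w).ae_le hXa),
    lintegral_withDensity_eq_lintegral_mul μ (by fun_prop : Measurable w)
      (by fun_prop : Measurable fun ω => ENNReal.ofReal (X ω - a))]
  refine lintegral_congr_ae (hXa.mono fun ω hω => ?_)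
  exact (mul_comm _ _).trans (ENNReal.ofReal_mul (sub_nonneg.2 hω)).symm

end TailIntegral

/-- The Fubini computation underlying Hoeffding's covariance formula: if `X ≥ a` and `Y ≥ a`
almost surely and `(X - a)(Y - a)` is integrable, then
`∫_a^∞ ∫_a^∞ P(X > x, Y > y) dx dy = E[(X - a)(Y - a)]`. -/
theorem integral_tail_prob_eq_expectation
    {Ω : Type*} [MeasurableSpace Ω] (μ : Measure Ω) [IsProbabilityMeasure μ]
    (X Y : Ω → ℝ) (hX : Measurable X) (hY : Measurable Y) (a : ℝ)
    (hXa : ∀ᵐ ω ∂μ, a ≤ X ω) (hYa : ∀ᵐ ω ∂μ, a ≤ Y ω)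
    (hint : Integrable (fun ω => (X ω - a) * (Y ω - a)) μ) :
    ∫ x in Set.Ioi a, ∫ y in Set.Ioi a, (μ {ω | X ω > x ∧ Y ω > y}).toReal
      = ∫ ω, (X ω - a) * (Y ω - a) ∂μ := by
  set ν := μ.withDensity fun ω => ENNReal.ofReal (Y ω - a)
  have hprod_nonneg : 0 ≤ᵐ[μ] fun ω => (X ω - a) * (Y ω - a) := by
    filter_upwards [hXa, hYa] with ω hω₁ hω₂
    exact mul_nonneg (sub_nonneg.2 hω₁) (sub_nonneg.2 hω₂)
  have htotal : ∫⁻ x in Set.Ioi a, ν {ω | x < X ω}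
      = ENNReal.ofReal (∫ ω, (X ω - a) * (Y ω - a) ∂μ) := by
    simp_rw [ν, ← lintegral_Ioi_measure_lt_and_lt_eq_withDensity μ hX hY hYa,
      lintegral_Ioi_lintegral_Ioi_measure_lt_and_lt μ hX hY hXa hYa]
    exact (ofReal_integral_eq_lintegral_ofReal hint hprod_nonneg).symm
  have hinner (x : ℝ) :
      ∫ y in Set.Ioi a, (μ {ω | X ω > x ∧ Y ω > y}).toReal = (ν {ω | x < X ω}).toReal := by
    rw [← lintegral_Ioi_measure_lt_and_lt_eq_withDensity μ hX hY hYa x]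
    have hanti : Antitone fun y => μ {ω | x < X ω ∧ y < Y ω} :=
      fun _ _ hle => measure_mono fun _ hω => ⟨hω.1, hle.trans_lt hω.2⟩
    exact integral_toReal hanti.measurable.aemeasurable (ae_of_all _ fun _ => measure_lt_top μ _)
  have hν_meas := (antitone_measure_setOf_lt ν X).measurable
  simp_rw [hinner]
  rw [integral_toReal hν_meas.aemeasurable
    (ae_lt_top hν_meas (htotal ▸ ENNReal.ofReal_ne_top)), htotal,
    ENNReal.toReal_ofReal (integral_nonneg_of_ae hprod_nonneg)]
end

section
/- Let X and Y be two associated real-valued random variables with finite variance, and let f and g be continuously differentiable complex-valued functions on ℝ with bounded derivatives f′ and g′. Then |Cov(f(X), g(Y))| ≤ ‖f′‖_∞ · ‖g′‖_∞ · Cov(X, Y), where ‖·‖_∞ denotes the supremum norm (Newman's covariance inequality). -/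
/-!
Writing `f x - f x' = ∫ (𝟙{s ≤ x} - 𝟙{s ≤ x'}) f'(s) ds` and averaging
`(f X - f X') * conj (g Y - g Y')` over an independent copy `(X', Y')` of `(X, Y)` gives
Hoeffding's identity `Cov(f X, g Y) = ∬ H(s, t) f'(s) conj (g'(t)) ds dt` with
`H(s, t) = Cov(𝟙{X ≥ s}, 𝟙{Y ≥ t})`. The indicators are nondecreasing functions of `X` and `Y`,
so association makes `H ≥ 0`; hence `|Cov(f X, g Y)| ≤ ‖f'‖∞ ‖g'‖∞ ∬ H`, and the case
`f = g = id` of the identity shows `∬ H = Cov(X, Y)`.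
-/

open MeasureTheory ProbabilityTheory

/-- Complex covariance `E(U V̄) - E(U) E(V̄)`. -/
noncomputable def covC {Ω : Type*} [MeasurableSpace Ω] (μ : Measure Ω) (U V : Ω → ℂ) : ℂ :=
  (∫ ω, U ω * (starRingEnd ℂ) (V ω) ∂μ)
    - (∫ ω, U ω ∂μ) * (starRingEnd ℂ) (∫ ω, V ω ∂μ)

/-- A finite family of random variables is associated if every pair of coordinatewise
nondecreasing measurable functions of it with square-integrable compositions has
nonnegative covariance. -/
def IsAssociated {Ω : Type*} [MeasurableSpace Ω] (μ : Measure Ω) {n : ℕ}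
    (X : Fin n → Ω → ℝ) : Prop :=
  ∀ f g : (Fin n → ℝ) → ℝ, Monotone f → Monotone g → Measurable f → Measurable g →
    MemLp (fun ω => f (fun i => X i ω)) 2 μ →
    MemLp (fun ω => g (fun i => X i ω)) 2 μ →
    0 ≤ cov μ (fun ω => f (fun i => X i ω)) (fun ω => g (fun i => X i ω))

open Set ComplexConjugate
open scoped ENNReal Interval

section

variable {Ω 𝕜 E : Type*} [MeasurableSpace Ω] [RCLike 𝕜] [NormedAddCommGroup E] [NormedSpace ℝ E]

noncomputable def rclikeCov (μ : Measure Ω) (U V : Ω → 𝕜) : 𝕜 :=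
  (∫ ω, U ω * conj (V ω) ∂μ) - (∫ ω, U ω ∂μ) * conj (∫ ω, V ω ∂μ)

lemma covC_eq_rclikeCov (μ : Measure Ω) (U V : Ω → ℂ) : covC μ U V = rclikeCov μ U V := rfl

lemma cov_eq_rclikeCov (μ : Measure Ω) (U V : Ω → ℝ) : cov μ U V = rclikeCov μ U V := by
  simp [cov, rclikeCov]

lemma memLp_comp_of_norm_deriv_le {μ : Measure Ω} [IsFiniteMeasure μ] {p : ℝ≥0∞} {f : ℝ → E}
    (hf : Differentiable ℝ f) {A : ℝ} (hA : ∀ x, ‖deriv f x‖ ≤ A) {X : Ω → ℝ}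
    (hX : MemLp X p μ) : MemLp (fun ω => f (X ω)) p μ := by
  have hlip : LipschitzWith A.toNNReal fun x => f x - f 0 :=
    lipschitzWith_of_nnnorm_deriv_le (hf.sub_const _) fun x => by
      rw [deriv_sub_const, ← NNReal.coe_le_coe, coe_nnnorm, Real.coe_toNNReal']
      exact (hA x).trans (le_max_left _ _)
  convert (hlip.comp_memLp (by simp) hX).add (memLp_const (f 0)) using 1
  ext ω
  simp

lemma norm_integral_smul_le {α : Type*} [MeasurableSpace α] {ν : Measure α} {H : α → ℝ}
    {c : α → E} {M : ℝ} (hH : Integrable H ν) (hH0 : ∀ a, 0 ≤ H a) (hc : ∀ a, ‖c a‖ ≤ M) :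
    ‖∫ a, H a • c a ∂ν‖ ≤ M * ∫ a, H a ∂ν := by
  rw [← integral_const_mul]
  refine (norm_integral_le_integral_norm _).trans <| integral_mono_of_nonneg
    (ae_of_all _ fun _ => norm_nonneg _) (hH.const_mul M) (ae_of_all _ fun a => ?_)
  change ‖H a • c a‖ ≤ M * H a
  rw [norm_smul, Real.norm_of_nonneg (hH0 a), mul_comm]
  exact mul_le_mul_of_nonneg_right (hc a) (hH0 a)

-- With `≤`, differences of steps are indicators of `Ioc`, as in the definition of `∫ in a..b`.
noncomputable def stepAt (s x : ℝ) : ℝ := if s ≤ x then 1 else 0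

lemma monotone_stepAt (s : ℝ) : Monotone (stepAt s) := fun x y hxy => by
  unfold stepAt
  split_ifs <;> linarith

@[fun_prop]
lemma Measurable.stepAt {α : Type*} [MeasurableSpace α] {a b : α → ℝ} (ha : Measurable a)
    (hb : Measurable b) : Measurable fun x => _root_.stepAt (a x) (b x) :=
  Measurable.ite (measurableSet_le ha hb) measurable_const measurable_const

lemma memLp_stepAt_comp {μ : Measure Ω} [IsFiniteMeasure μ] {X : Ω → ℝ} (hX : Measurable X)
    (s : ℝ) (p : ℝ≥0∞) : MemLp (fun ω => stepAt s (X ω)) p μ :=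
  MemLp.of_bound (by fun_prop : Measurable _).aestronglyMeasurable 1
    (ae_of_all _ fun ω => by unfold stepAt; split_ifs <;> simp)

lemma stepAt_sub_stepAt (s x y : ℝ) :
    stepAt s x - stepAt s y = (Ioc y x).indicator 1 s - (Ioc x y).indicator 1 s := by
  simp only [stepAt, indicator, mem_Ioc, Pi.one_apply]
  split_ifs <;> grind

lemma abs_stepAt_sub_stepAt (s x y : ℝ) : |stepAt s x - stepAt s y| = (Ι y x).indicator 1 s := by
  simp only [stepAt, indicator, mem_uIoc, Pi.one_apply]
  split_ifs <;> norm_num <;> grind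

lemma stepAt_sub_stepAt_smul_eq (c : ℝ → E) (x y : ℝ) :
    (fun s => (stepAt s x - stepAt s y) • c s) = (Ioc y x).indicator c - (Ioc x y).indicator c := by
  ext s
  simp only [stepAt_sub_stepAt, sub_smul, Pi.sub_apply, indicator, Pi.one_apply]
  split_ifs <;> simp

lemma IntervalIntegrable.integrable_stepAt_sub_smul {c : ℝ → E} {x y : ℝ}
    (hc : IntervalIntegrable c volume y x) :
    Integrable fun s => (stepAt s x - stepAt s y) • c s := by
  rw [stepAt_sub_stepAt_smul_eq]
  exact (hc.1.integrable_indicator measurableSet_Ioc).sub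
    (hc.2.integrable_indicator measurableSet_Ioc)

lemma integral_stepAt_sub_smul [CompleteSpace E] {c : ℝ → E} {x y : ℝ}
    (hc : IntervalIntegrable c volume y x) :
    ∫ s, (stepAt s x - stepAt s y) • c s = ∫ s in y..x, c s := by
  rw [stepAt_sub_stepAt_smul_eq, integral_sub' (hc.1.integrable_indicator measurableSet_Ioc)
    (hc.2.integrable_indicator measurableSet_Ioc), integral_indicator measurableSet_Ioc,
    integral_indicator measurableSet_Ioc]
  rfl

lemma sub_eq_integral_stepAt_sub_smul_deriv [CompleteSpace E] {f : ℝ → E} (hf : ContDiff ℝ 1 f)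
    (x y : ℝ) : f x - f y = ∫ s, (stepAt s x - stepAt s y) • deriv f s := by
  have hint := (hf.continuous_deriv le_rfl).intervalIntegrable (μ := volume) y x
  rw [integral_stepAt_sub_smul hint, intervalIntegral.integral_deriv_eq_sub
    (fun t _ => (hf.differentiable one_ne_zero).differentiableAt) hint]

lemma integral_norm_stepAt_sub_smul_le {c : ℝ → E} {A : ℝ} (hc : ∀ s, ‖c s‖ ≤ A) (x y : ℝ) :
    ∫ s, ‖(stepAt s x - stepAt s y) • c s‖ ≤ A * |x - y| := by
  calc ∫ s, ‖(stepAt s x - stepAt s y) • c s‖ ≤ ∫ s, (Ι y x).indicator (fun _ => A) s := by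
        refine integral_mono_of_nonneg (ae_of_all _ fun _ => norm_nonneg _)
          ((integrableOn_const (s := Ι y x) measure_Ioc_lt_top.ne).integrable_indicator
            measurableSet_uIoc)
          (ae_of_all _ fun s => ?_)
        change ‖(stepAt s x - stepAt s y) • c s‖ ≤ _
        rw [norm_smul, Real.norm_eq_abs, abs_stepAt_sub_stepAt]
        by_cases hs : s ∈ Ι y x <;> simp [hs, hc s]
    _ = A * |x - y| := by
        rw [integral_indicator_const _ measurableSet_uIoc, uIoc,
          Real.volume_real_Ioc_of_le inf_le_sup, max_sub_min_eq_abs, smul_eq_mul, mul_comm]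

noncomputable def hoeffdingKernel (f g : ℝ → 𝕜) (x₁ x₂ y₁ y₂ : ℝ) (σ : ℝ × ℝ) : 𝕜 :=
  ((stepAt σ.1 x₁ - stepAt σ.1 x₂) * (stepAt σ.2 y₁ - stepAt σ.2 y₂)) •
    (deriv f σ.1 * conj (deriv g σ.2))

lemma hoeffdingKernel_eq_mul (f g : ℝ → 𝕜) (x₁ x₂ y₁ y₂ : ℝ) (σ : ℝ × ℝ) :
    hoeffdingKernel f g x₁ x₂ y₁ y₂ σ =
      ((stepAt σ.1 x₁ - stepAt σ.1 x₂) • deriv f σ.1) *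
        ((stepAt σ.2 y₁ - stepAt σ.2 y₂) • conj (deriv g σ.2)) :=
  (smul_mul_smul_comm _ _ _ _).symm

section HoeffdingKernel

variable {f g : ℝ → 𝕜}

lemma integrable_hoeffdingKernel (hf : ContDiff ℝ 1 f) (hg : ContDiff ℝ 1 g)
    (x₁ x₂ y₁ y₂ : ℝ) : Integrable (hoeffdingKernel f g x₁ x₂ y₁ y₂) (volume.prod volume) := by
  simp_rw [funext (hoeffdingKernel_eq_mul f g x₁ x₂ y₁ y₂)]
  exact ((hf.continuous_deriv le_rfl).intervalIntegrable _ _).integrable_stepAt_sub_smul.mul_prod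
    ((RCLike.continuous_conj.comp (hg.continuous_deriv le_rfl)).intervalIntegrable _ _
      ).integrable_stepAt_sub_smul

lemma sub_mul_conj_sub_eq_integral_hoeffdingKernel (hf : ContDiff ℝ 1 f) (hg : ContDiff ℝ 1 g)
    (x₁ x₂ y₁ y₂ : ℝ) :
    (f x₁ - f x₂) * conj (g y₁ - g y₂) =
      ∫ σ, hoeffdingKernel f g x₁ x₂ y₁ y₂ σ ∂(volume.prod volume) := by
  simp_rw [hoeffdingKernel_eq_mul]
  rw [integral_prod_mul (fun s => (stepAt s x₁ - stepAt s x₂) • deriv f s)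
    (fun t => (stepAt t y₁ - stepAt t y₂) • conj (deriv g t)),
    sub_eq_integral_stepAt_sub_smul_deriv hf, sub_eq_integral_stepAt_sub_smul_deriv hg,
    ← integral_conj]
  simp_rw [RCLike.conj_smul]

lemma integral_norm_hoeffdingKernel_le {A B : ℝ} (hA : ∀ x, ‖deriv f x‖ ≤ A)
    (hB : ∀ y, ‖deriv g y‖ ≤ B) (x₁ x₂ y₁ y₂ : ℝ) :
    ∫ σ, ‖hoeffdingKernel f g x₁ x₂ y₁ y₂ σ‖ ∂(volume.prod volume) ≤
      A * |x₁ - x₂| * (B * |y₁ - y₂|) := by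
  simp_rw [hoeffdingKernel_eq_mul, norm_mul]
  rw [integral_prod_mul (fun s => ‖(stepAt s x₁ - stepAt s x₂) • deriv f s‖)
    (fun t => ‖(stepAt t y₁ - stepAt t y₂) • conj (deriv g t)‖)]
  exact mul_le_mul (integral_norm_stepAt_sub_smul_le hA _ _)
    (integral_norm_stepAt_sub_smul_le (fun y => (RCLike.norm_conj _).trans_le (hB y)) _ _)
    (integral_nonneg fun _ => norm_nonneg _)
    (mul_nonneg ((norm_nonneg _).trans (hA 0)) (abs_nonneg _))

end HoeffdingKernel

-- Hoeffding's `H(s, t) = P(X ≥ s, Y ≥ t) - P(X ≥ s) P(Y ≥ t)`.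
noncomputable def stepCov (μ : Measure Ω) (X Y : Ω → ℝ) (σ : ℝ × ℝ) : ℝ :=
  cov μ (fun ω => stepAt σ.1 (X ω)) (fun ω => stepAt σ.2 (Y ω))

lemma stepCov_nonneg {μ : Measure Ω} [IsFiniteMeasure μ] {X Y : Ω → ℝ}
    (hassoc : IsAssociated μ ![X, Y]) (hX : Measurable X) (hY : Measurable Y)
    (σ : ℝ × ℝ) : 0 ≤ stepCov μ X Y σ := by
  simpa [stepCov] using hassoc (fun v => stepAt σ.1 (v 0)) (fun v => stepAt σ.2 (v 1))
    (fun v w h => monotone_stepAt _ (h 0)) (fun v w h => monotone_stepAt _ (h 1))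
    (by fun_prop) (by fun_prop) (by simpa using memLp_stepAt_comp hX σ.1 2)
    (by simpa using memLp_stepAt_comp hY σ.2 2)

section Probability

variable {μ : Measure Ω} [IsProbabilityMeasure μ] {X Y : Ω → ℝ}

lemma integral_sub_mul_conj_sub_prod {U V : Ω → 𝕜} (hU : MemLp U 2 μ) (hV : MemLp V 2 μ) :
    ∫ p, (U p.1 - U p.2) * conj (V p.1 - V p.2) ∂(μ.prod μ) = 2 * rclikeCov μ U V := by
  have hV' : MemLp (fun ω => conj (V ω)) 2 μ := hV.star
  have hUV : Integrable (fun ω => U ω * conj (V ω)) μ := hU.integrable_mul hV'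
  have hU₁ := hU.integrable one_le_two
  have hV₁ := hV'.integrable one_le_two
  have expand : ∀ p : Ω × Ω, (U p.1 - U p.2) * conj (V p.1 - V p.2) =
      (U p.1 * conj (V p.1) + U p.2 * conj (V p.2)) -
        (U p.1 * conj (V p.2) + conj (V p.1) * U p.2) :=
    fun p => by rw [map_sub]; ring
  have hdiag : Integrable (fun p : Ω × Ω => U p.1 * conj (V p.1) + U p.2 * conj (V p.2))
      (μ.prod μ) := (hUV.comp_fst μ).add (hUV.comp_snd μ)
  have hcross : Integrable (fun p : Ω × Ω => U p.1 * conj (V p.2) + conj (V p.1) * U p.2)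
      (μ.prod μ) := (hU₁.mul_prod hV₁).add (hV₁.mul_prod hU₁)
  simp_rw [expand]
  rw [integral_sub hdiag hcross, integral_add (hUV.comp_fst μ) (hUV.comp_snd μ),
    integral_add (hU₁.mul_prod hV₁) (hV₁.mul_prod hU₁),
    integral_fun_fst (fun ω => U ω * conj (V ω)), integral_fun_snd (fun ω => U ω * conj (V ω)),
    integral_prod_mul U (fun ω => conj (V ω)), integral_prod_mul (fun ω => conj (V ω)) U,
    integral_conj]
  simp only [probReal_univ, one_smul, rclikeCov]
  ring

variable {f g : ℝ → 𝕜}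

lemma integral_hoeffdingKernel_prod (hX : Measurable X) (hY : Measurable Y) (σ : ℝ × ℝ) :
    ∫ p, hoeffdingKernel f g (X p.1) (X p.2) (Y p.1) (Y p.2) σ ∂(μ.prod μ) =
      2 * (stepCov μ X Y σ • (deriv f σ.1 * conj (deriv g σ.2))) := by
  have h := integral_sub_mul_conj_sub_prod (μ := μ) (memLp_stepAt_comp hX σ.1 2)
    (memLp_stepAt_comp hY σ.2 2)
  simp only [conj_trivial] at h
  rw [stepCov, cov_eq_rclikeCov]
  simp only [hoeffdingKernel]
  rw [integral_smul_const, h, mul_smul, two_smul, two_mul]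

lemma integrable_hoeffdingKernel_prod (hX : Measurable X) (hY : Measurable Y) (hX₂ : MemLp X 2 μ)
    (hY₂ : MemLp Y 2 μ) (hf : ContDiff ℝ 1 f) (hg : ContDiff ℝ 1 g) {A B : ℝ}
    (hA : ∀ x, ‖deriv f x‖ ≤ A) (hB : ∀ y, ‖deriv g y‖ ≤ B) :
    Integrable (fun q : (Ω × Ω) × (ℝ × ℝ) =>
        hoeffdingKernel f g (X q.1.1) (X q.1.2) (Y q.1.1) (Y q.1.2) q.2)
      ((μ.prod μ).prod (volume.prod volume)) := by
  have hmeas : AEStronglyMeasurable (fun q : (Ω × Ω) × (ℝ × ℝ) =>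
      hoeffdingKernel f g (X q.1.1) (X q.1.2) (Y q.1.1) (Y q.1.2) q.2)
      ((μ.prod μ).prod (volume.prod volume)) := by
    have hconj : Measurable (conj : 𝕜 → 𝕜) := RCLike.continuous_conj.measurable
    unfold hoeffdingKernel
    exact (by fun_prop : Measurable _).aestronglyMeasurable
  have hXX : MemLp (fun p : Ω × Ω => X p.1 - X p.2) 2 (μ.prod μ) :=
    (hX₂.comp_measurePreserving measurePreserving_fst).sub
      (hX₂.comp_measurePreserving measurePreserving_snd)
  have hYY : MemLp (fun p : Ω × Ω => Y p.1 - Y p.2) 2 (μ.prod μ) :=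
    (hY₂.comp_measurePreserving measurePreserving_fst).sub
      (hY₂.comp_measurePreserving measurePreserving_snd)
  refine (integrable_prod_iff hmeas).2
    ⟨ae_of_all _ fun p => integrable_hoeffdingKernel hf hg (X p.1) (X p.2) (Y p.1) (Y p.2), ?_⟩
  refine ((hXX.integrable_mul hYY).norm.const_mul (A * B)).mono' hmeas.norm.integral_prod_right'
    (ae_of_all _ fun p => ?_)
  rw [Real.norm_of_nonneg (integral_nonneg fun _ => norm_nonneg _)]
  calc _ ≤ A * |X p.1 - X p.2| * (B * |Y p.1 - Y p.2|) :=
        integral_norm_hoeffdingKernel_le hA hB _ _ _ _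
    _ = A * B * ‖(X p.1 - X p.2) * (Y p.1 - Y p.2)‖ := by
      rw [norm_mul, Real.norm_eq_abs, Real.norm_eq_abs]; ring

theorem rclikeCov_comp_eq_integral_stepCov_smul (hX : Measurable X) (hY : Measurable Y)
    (hX₂ : MemLp X 2 μ) (hY₂ : MemLp Y 2 μ) (hf : ContDiff ℝ 1 f) (hg : ContDiff ℝ 1 g)
    {A B : ℝ} (hA : ∀ x, ‖deriv f x‖ ≤ A) (hB : ∀ y, ‖deriv g y‖ ≤ B) :
    rclikeCov μ (fun ω => f (X ω)) (fun ω => g (Y ω)) =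
      ∫ σ, stepCov μ X Y σ • (deriv f σ.1 * conj (deriv g σ.2)) ∂(volume.prod volume) := by
  have hU := memLp_comp_of_norm_deriv_le (hf.differentiable one_ne_zero) hA hX₂
  have hV := memLp_comp_of_norm_deriv_le (hg.differentiable one_ne_zero) hB hY₂
  refine mul_left_cancel₀ (two_ne_zero (α := 𝕜)) ?_
  calc 2 * rclikeCov μ (fun ω => f (X ω)) (fun ω => g (Y ω))
      = ∫ p, (f (X p.1) - f (X p.2)) * conj (g (Y p.1) - g (Y p.2)) ∂(μ.prod μ) :=
        (integral_sub_mul_conj_sub_prod hU hV).symm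
    _ = ∫ p, ∫ σ, hoeffdingKernel f g (X p.1) (X p.2) (Y p.1) (Y p.2) σ ∂(volume.prod volume)
          ∂(μ.prod μ) := by
        simp_rw [sub_mul_conj_sub_eq_integral_hoeffdingKernel hf hg]
    _ = ∫ σ, ∫ p, hoeffdingKernel f g (X p.1) (X p.2) (Y p.1) (Y p.2) σ ∂(μ.prod μ)
          ∂(volume.prod volume) :=
        integral_integral_swap (integrable_hoeffdingKernel_prod hX hY hX₂ hY₂ hf hg hA hB)
    _ = 2 * ∫ σ, stepCov μ X Y σ • (deriv f σ.1 * conj (deriv g σ.2)) ∂(volume.prod volume) := by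
        simp_rw [integral_hoeffdingKernel_prod hX hY]
        exact integral_const_mul _ _

lemma integrable_stepCov (hX : Measurable X) (hY : Measurable Y) (hX₂ : MemLp X 2 μ)
    (hY₂ : MemLp Y 2 μ) : Integrable (stepCov μ X Y) (volume.prod volume) := by
  have h := (integrable_hoeffdingKernel_prod (f := id) (g := id) hX hY hX₂ hY₂ contDiff_id
    contDiff_id (A := 1) (B := 1) (by simp) (by simp)).integral_prod_right
  simp_rw [integral_hoeffdingKernel_prod hX hY] at h
  simpa using h.div_const 2

lemma cov_eq_integral_stepCov (hX : Measurable X) (hY : Measurable Y) (hX₂ : MemLp X 2 μ)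
    (hY₂ : MemLp Y 2 μ) : cov μ X Y = ∫ σ, stepCov μ X Y σ ∂(volume.prod volume) := by
  simpa [cov_eq_rclikeCov] using rclikeCov_comp_eq_integral_stepCov_smul (f := id) (g := id)
    hX hY hX₂ hY₂ contDiff_id contDiff_id (A := 1) (B := 1) (by simp) (by simp)

end Probability

end

/-- Newman's covariance inequality: if `X`, `Y` are associated with finite variance and
`f, g : ℝ → ℂ` are `C¹` with bounded derivatives, then
`|Cov(f(X), g(Y))| ≤ ‖f′‖_∞ ‖g′‖_∞ Cov(X, Y)`. -/
theorem newman_covariance_inequality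
    {Ω : Type*} [MeasurableSpace Ω] (μ : Measure Ω) [IsProbabilityMeasure μ]
    (X Y : Ω → ℝ) (hX : Measurable X) (hY : Measurable Y)
    (hX2 : MemLp X 2 μ) (hY2 : MemLp Y 2 μ)
    (hassoc : IsAssociated μ ![X, Y])
    (f g : ℝ → ℂ) (hf : ContDiff ℝ 1 f) (hg : ContDiff ℝ 1 g)
    (hf' : ∃ C, ∀ x, ‖deriv f x‖ ≤ C) (hg' : ∃ C, ∀ x, ‖deriv g x‖ ≤ C) :
    ‖covC μ (fun ω => f (X ω)) (fun ω => g (Y ω))‖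
      ≤ (⨆ x, ‖deriv f x‖) * (⨆ x, ‖deriv g x‖) * cov μ X Y := by
  obtain ⟨Cf, hCf⟩ := hf'
  obtain ⟨Cg, hCg⟩ := hg'
  have hA : ∀ x, ‖deriv f x‖ ≤ ⨆ x, ‖deriv f x‖ := le_ciSup ⟨Cf, forall_mem_range.2 hCf⟩
  have hB : ∀ y, ‖deriv g y‖ ≤ ⨆ y, ‖deriv g y‖ := le_ciSup ⟨Cg, forall_mem_range.2 hCg⟩
  rw [covC_eq_rclikeCov, rclikeCov_comp_eq_integral_stepCov_smul hX hY hX2 hY2 hf hg hA hB,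
    cov_eq_integral_stepCov hX hY hX2 hY2]
  refine norm_integral_smul_le (integrable_stepCov hX hY hX2 hY2)
    (stepCov_nonneg hassoc hX hY) fun σ => ?_
  rw [norm_mul, RCLike.norm_conj]
  exact mul_le_mul (hA _) (hB _) (norm_nonneg _) ((norm_nonneg _).trans (hA 0))
end

section
/- Let X and Y be associated real-valued random variables with finite variance and E(X) = 0. Then E[X·Y·1_{(Y ≤ 0)}] ≥ 0, and consequently E[(max(X, X + Y))²] ≤ E[(X + Y)²]. -/
open MeasureTheory ProbabilityTheory

/-! `E[X Y 1_{(Y ≤ 0)}] = E[X · min(Y, 0)] = Cov(X, min(Y, 0))` because `E X = 0`, and this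
covariance is nonnegative by association since `min(·, 0)` is monotone. For the second claim,
`(X + Y)² = (max(X, X + Y))² + 2 X min(Y, 0) + min(Y, 0)²` pointwise. -/

lemma mul_mul_ite_nonpos_eq_mul_min (x y : ℝ) :
    x * y * (if y ≤ 0 then 1 else 0) = x * min y 0 := by
  split_ifs with h
  · rw [mul_one, min_eq_left h]
  · rw [mul_zero, min_eq_right (le_of_not_ge h), mul_zero]

lemma max_self_add_eq_add_max_zero (x y : ℝ) : max x (x + y) = x + max y 0 := by
  rw [← max_add_add_left, add_zero, max_comm]

lemma sq_add_eq_sq_max_self_add_add (x y : ℝ) :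
    (x + y) ^ 2 = max x (x + y) ^ 2 + (2 * (x * min y 0) + min y 0 ^ 2) := by
  rcases le_total y 0 with h | h
  · rw [max_eq_left (by linarith), min_eq_left h]; ring
  · rw [max_eq_right (by linarith), min_eq_right h]; ring

section Integral

variable {α : Type*} [MeasurableSpace α] {μ : Measure α}

lemma MeasureTheory.MemLp.min_zero {p : ENNReal} {f : α → ℝ} (hf : MemLp f p μ) :
    MemLp (fun x => min (f x) 0) p μ :=
  (LipschitzWith.id.min_const 0).comp_memLp (min_self 0) hf

lemma integral_sq_max_self_add_le {f g : α → ℝ} (hf : MemLp f 2 μ) (hg : MemLp g 2 μ)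
    (hfg : 0 ≤ ∫ x, f x * min (g x) 0 ∂μ) :
    ∫ x, max (f x) (f x + g x) ^ 2 ∂μ ≤ ∫ x, (f x + g x) ^ 2 ∂μ := by
  have hmax : MemLp (fun x => max (f x) (f x + g x)) 2 μ := by
    simp only [max_self_add_eq_add_max_zero]
    exact hf.add hg.pos_part
  have hmul : Integrable (fun x => f x * min (g x) 0) μ := hf.integrable_mul hg.min_zero
  have hrest : Integrable (fun x => 2 * (f x * min (g x) 0) + min (g x) 0 ^ 2) μ :=
    (hmul.const_mul 2).add hg.min_zero.integrable_sq
  have hrest_nonneg : 0 ≤ ∫ x, 2 * (f x * min (g x) 0) + min (g x) 0 ^ 2 ∂μ := by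
    rw [integral_add (hmul.const_mul 2) hg.min_zero.integrable_sq, integral_const_mul]
    exact add_nonneg (mul_nonneg zero_le_two hfg) (integral_nonneg fun x => sq_nonneg _)
  calc ∫ x, max (f x) (f x + g x) ^ 2 ∂μ
      ≤ ∫ x, max (f x) (f x + g x) ^ 2 ∂μ
          + ∫ x, 2 * (f x * min (g x) 0) + min (g x) 0 ^ 2 ∂μ :=
        le_add_of_nonneg_right hrest_nonneg
    _ = ∫ x, (f x + g x) ^ 2 ∂μ := by
        rw [← integral_add hmax.integrable_sq hrest]
        simp only [← sq_add_eq_sq_max_self_add_add]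

end Integral

lemma IsAssociated.cov_comp_nonneg {Ω : Type*} [MeasurableSpace Ω] {μ : Measure Ω}
    {X Y : Ω → ℝ} (h : IsAssociated μ ![X, Y]) {f g : ℝ → ℝ} (hf : Monotone f)
    (hg : Monotone g) (hf_meas : Measurable f) (hg_meas : Measurable g)
    (hfX : MemLp (f ∘ X) 2 μ) (hgY : MemLp (g ∘ Y) 2 μ) :
    0 ≤ cov μ (f ∘ X) (g ∘ Y) :=
  h (fun v => f (v 0)) (fun v => g (v 1)) (fun _ _ hab => hf (hab 0))
    (fun _ _ hab => hg (hab 1)) (hf_meas.comp (measurable_pi_apply 0))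
    (hg_meas.comp (measurable_pi_apply 1)) hfX hgY

theorem sq_max_le_of_associated_general
    {Ω : Type*} [MeasurableSpace Ω] (μ : Measure Ω)
    (X Y : Ω → ℝ)
    (hX2 : MemLp X 2 μ) (hY2 : MemLp Y 2 μ)
    (hassoc : IsAssociated μ ![X, Y]) (hmean : ∫ ω, X ω ∂μ = 0) :
    0 ≤ ∫ ω, X ω * Y ω * (if Y ω ≤ 0 then (1 : ℝ) else 0) ∂μ ∧
    ∫ ω, (max (X ω) (X ω + Y ω)) ^ 2 ∂μ ≤ ∫ ω, (X ω + Y ω) ^ 2 ∂μ := by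
  have hcov : 0 ≤ ∫ ω, X ω * min (Y ω) 0 ∂μ := by
    simpa [cov, hmean] using hassoc.cov_comp_nonneg monotone_id
      (monotone_id.min monotone_const) measurable_id (measurable_id.min measurable_const)
      hX2 hY2.min_zero
  refine ⟨?_, integral_sq_max_self_add_le hX2 hY2 hcov⟩
  simpa only [mul_mul_ite_nonpos_eq_mul_min] using hcov

/-- If `X`, `Y` are associated with finite variance and `E(X) = 0`, then
`E[X Y 1_{(Y ≤ 0)}] ≥ 0`, and consequently `E[(max(X, X + Y))²] ≤ E[(X + Y)²]`. -/
theorem sq_max_le_of_associated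
    {Ω : Type*} [MeasurableSpace Ω] (μ : Measure Ω) [IsProbabilityMeasure μ]
    (X Y : Ω → ℝ) (hX : Measurable X) (hY : Measurable Y)
    (hX2 : MemLp X 2 μ) (hY2 : MemLp Y 2 μ)
    (hassoc : IsAssociated μ ![X, Y]) (hmean : ∫ ω, X ω ∂μ = 0) :
    0 ≤ ∫ ω, X ω * Y ω * (if Y ω ≤ 0 then (1 : ℝ) else 0) ∂μ ∧
    ∫ ω, (max (X ω) (X ω + Y ω)) ^ 2 ∂μ ≤ ∫ ω, (X ω + Y ω) ^ 2 ∂μ :=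
  sq_max_le_of_associated_general μ X Y hX2 hY2 hassoc hmean
end

section
/- Let X₁, X₂, …, Xₙ be associated, mean-zero, finite-variance random variables, let Sₖ = X₁ + ⋯ + Xₖ for 1 ≤ k ≤ n, and let Mₙ = max(S₁, S₂, …, Sₙ). Then E(Mₙ²) ≤ Var(Sₙ) (Newman–Wright maximal inequality). -/
open MeasureTheory ProbabilityTheory

/-!
Index the variables from `0`, so that `S k = X 0 + ⋯ + X (k-1)`, and put `t k = S n - S k`
(`tailSum`) and `T j = min_{j < k ≤ n} t k` (`tailMin`, with `T n = 0`). Then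
`t j - T j = max_{j < k ≤ n} (S k - S j)` is the maximum of the partial sums of `X j, …, X (n-1)`,
and `M = t 0 - T 0`. Downward induction on `j` gives `E[(t j - T j)²] ≤ E[t j²]`: pointwise,
`T j = min (t (j+1)) (T (j+1))` and `t j = X j + t (j+1)` give `D j ≤ D (j+1) - 2 X j T j` for
`D j = (t j - T j)² - t j²` (`maxSqDefect`), and `E[X j T j] = Cov(X j, T j) ≥ 0` by association,
since `T j` is a nondecreasing function of the `X i` and `E X j = 0`. At `j = 0` this reads
`E[M²] ≤ E[S n²] = Var(S n)`.
-/

lemma IsAssociated.integral_mul_nonneg {Ω : Type*} [MeasurableSpace Ω] {μ : Measure Ω} {n : ℕ}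
    {X : Fin n → Ω → ℝ} (hX : IsAssociated μ X) {f g : (Fin n → ℝ) → ℝ}
    (hf : Monotone f) (hg : Monotone g) (hfm : Measurable f) (hgm : Measurable g)
    (hf2 : MemLp (fun ω => f (X · ω)) 2 μ) (hg2 : MemLp (fun ω => g (X · ω)) 2 μ)
    (hf0 : ∫ ω, f (X · ω) ∂μ = 0) :
    0 ≤ ∫ ω, f (X · ω) * g (X · ω) ∂μ := by
  simpa [cov, hf0] using hX f g hf hg hfm hgm hf2 hg2

open Finset

namespace NewmanWright

variable {n : ℕ}

def tailSum (x : Fin n → ℝ) (k : ℕ) : ℝ := ∑ i : Fin n with k ≤ i.val, x i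

/-- `min_{j < k ≤ n} tailSum x k`; inserting `n` keeps the index set nonempty, and since
`tailSum x n = 0` it only matters for `j ≥ n`. -/
def tailMin (x : Fin n → ℝ) (j : ℕ) : ℝ :=
  (insert n (Ioc j n)).inf' (insert_nonempty _ _) (tailSum x)

def maxSqDefect (x : Fin n → ℝ) (j : ℕ) : ℝ :=
  (tailSum x j - tailMin x j) ^ 2 - tailSum x j ^ 2

lemma sum_lt_eq_sum_sub_tailSum (x : Fin n → ℝ) (k : ℕ) :
    ∑ i : Fin n with i.val < k, x i = ∑ i, x i - tailSum x k := by
  rw [← sum_filter_add_sum_filter_not univ (fun i : Fin n => (i : ℕ) < k) x]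
  simp [tailSum]

lemma tailSum_zero (x : Fin n → ℝ) : tailSum x 0 = ∑ i, x i := by
  simp [tailSum]

lemma tailSum_self (x : Fin n → ℝ) : tailSum x n = 0 := by
  rw [tailSum, filter_false_of_mem fun i _ => not_le.2 i.is_lt, sum_empty]

lemma tailSum_eq_add_succ (x : Fin n → ℝ) {j : ℕ} (hj : j < n) :
    tailSum x j = x ⟨j, hj⟩ + tailSum x (j + 1) := by
  have : univ.filter (fun i : Fin n => j ≤ (i : ℕ))
      = insert ⟨j, hj⟩ (univ.filter fun i : Fin n => j + 1 ≤ (i : ℕ)) := by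
    ext i; simp [Fin.ext_iff]; omega
  rw [tailSum, this, sum_insert (by simp)]
  rfl

lemma tailMin_self (x : Fin n → ℝ) : tailMin x n = 0 := by
  simp [tailMin, tailSum_self]

lemma tailMin_eq_min_succ (x : Fin n → ℝ) {j : ℕ} (hj : j < n) :
    tailMin x j = min (tailSum x (j + 1)) (tailMin x (j + 1)) := by
  have : insert n (Ioc j n) = insert (j + 1) (insert n (Ioc (j + 1) n)) := by
    ext k; simp; omega
  rw [tailMin, inf'_congr _ this fun _ _ => rfl, inf'_insert]
  rfl

lemma monotone_tailSum (k : ℕ) : Monotone fun x : Fin n → ℝ => tailSum x k :=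
  fun _ _ hxy => sum_le_sum fun i _ => hxy i

lemma monotone_tailMin (j : ℕ) : Monotone fun x : Fin n → ℝ => tailMin x j :=
  fun _ _ hxy => inf'_mono_fun fun k _ => monotone_tailSum k hxy

lemma continuous_tailSum (k : ℕ) : Continuous fun x : Fin n → ℝ => tailSum x k :=
  continuous_finsetSum _ fun i _ => continuous_apply i

lemma continuous_tailMin (j : ℕ) : Continuous fun x : Fin n → ℝ => tailMin x j :=
  Continuous.finset_inf'_apply _ fun k _ => continuous_tailSum k

lemma sup'_sum_lt_eq_sum_sub_tailMin (x : Fin n → ℝ) (hn : 1 ≤ n) :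
    (Icc 1 n).sup' (nonempty_Icc.mpr hn) (fun k => ∑ i : Fin n with i.val < k, x i)
      = ∑ i, x i - tailMin x 0 := by
  have hI : insert n (Ioc 0 n) = Icc 1 n := by ext k; simp; omega
  simp_rw [sum_lt_eq_sum_sub_tailSum]
  obtain ⟨k, hk, hmin⟩ := exists_mem_eq_inf' (insert_nonempty n (Ioc 0 n)) (tailSum x)
  refine le_antisymm (sup'_le _ _ fun k hk => ?_) ?_
  · exact sub_le_sub_left (inf'_le _ (hI ▸ hk)) _
  · rw [tailMin, hmin]
    exact le_sup'_of_le _ (hI ▸ hk) le_rfl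

lemma maxSqDefect_le (x : Fin n → ℝ) {j : ℕ} (hj : j < n) :
    maxSqDefect x j ≤ maxSqDefect x (j + 1) - 2 * (x ⟨j, hj⟩ * tailMin x j) := by
  rw [maxSqDefect, maxSqDefect, tailSum_eq_add_succ x hj, tailMin_eq_min_succ x hj]
  set a := tailMin x (j + 1)
  set b := tailSum x (j + 1)
  have hmin : (min b a - b) ^ 2 ≤ (a - b) ^ 2 := by
    rcases le_total b a with h | h <;> simp only [h, min_eq_left, min_eq_right] <;> nlinarith
  linear_combination hmin

section Probability

variable {Ω : Type*} [MeasurableSpace Ω] {μ : Measure Ω} {X : Fin n → Ω → ℝ}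

lemma memLp_tailSum (hX : ∀ i, MemLp (X i) 2 μ) (k : ℕ) :
    MemLp (fun ω => tailSum (X · ω) k) 2 μ :=
  memLp_finsetSum _ fun i _ => hX i

lemma memLp_tailMin (hX : ∀ i, MemLp (X i) 2 μ) (j : ℕ) :
    MemLp (fun ω => tailMin (X · ω) j) 2 μ := by
  have : (fun ω => tailMin (X · ω) j)
      = (insert n (Ioc j n)).inf' (insert_nonempty _ _) fun k ω => tailSum (X · ω) k := by
    ext ω
    rw [tailMin, Finset.inf'_apply]
  rw [this]
  exact inf'_induction (p := (MemLp · 2 μ)) _ _ (fun _ hf _ hg => hf.inf hg)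
    fun k _ => memLp_tailSum hX k

lemma integrable_maxSqDefect (hX : ∀ i, MemLp (X i) 2 μ) (j : ℕ) :
    Integrable (fun ω => maxSqDefect (X · ω) j) μ :=
  ((memLp_tailSum hX j).sub (memLp_tailMin hX j)).integrable_sq.sub
    (memLp_tailSum hX j).integrable_sq

lemma integral_mul_tailMin_nonneg (hassoc : IsAssociated μ X) (hX : ∀ i, MemLp (X i) 2 μ)
    {j : ℕ} (hj : j < n) (hmean : ∫ ω, X ⟨j, hj⟩ ω ∂μ = 0) :
    0 ≤ ∫ ω, X ⟨j, hj⟩ ω * tailMin (X · ω) j ∂μ :=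
  hassoc.integral_mul_nonneg (fun _ _ h => h _) (monotone_tailMin j) (measurable_pi_apply _)
    (continuous_tailMin j).measurable (hX _) (memLp_tailMin hX j) hmean

lemma integral_maxSqDefect_nonpos (hassoc : IsAssociated μ X) (hX : ∀ i, MemLp (X i) 2 μ)
    (hmean : ∀ i, ∫ ω, X i ω ∂μ = 0) {j : ℕ} (hj : j ≤ n) :
    ∫ ω, maxSqDefect (X · ω) j ∂μ ≤ 0 := by
  induction hj using Nat.decreasingInduction with
  | self => simp [maxSqDefect, tailSum_self, tailMin_self]
  | of_succ j hj ih =>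
    have hXT : Integrable (fun ω => X ⟨j, hj⟩ ω * tailMin (X · ω) j) μ :=
      (hX _).integrable_mul (memLp_tailMin hX j)
    have hstep : ∫ ω, maxSqDefect (X · ω) j ∂μ ≤ ∫ ω, (maxSqDefect (X · ω) (j + 1)
        - 2 * (X ⟨j, hj⟩ ω * tailMin (X · ω) j)) ∂μ := integral_mono (integrable_maxSqDefect hX j)
      ((integrable_maxSqDefect hX (j + 1)).sub (hXT.const_mul 2)) fun ω => maxSqDefect_le _ hj
    rw [integral_sub (integrable_maxSqDefect hX (j + 1)) (hXT.const_mul 2),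
      integral_const_mul] at hstep
    linarith [integral_mul_tailMin_nonneg hassoc hX hj (hmean _)]

end Probability

end NewmanWright

open NewmanWright in
theorem newman_wright_maximal_inequality_general
    {Ω : Type*} [MeasurableSpace Ω] (μ : Measure Ω) [IsProbabilityMeasure μ]
    {n : ℕ} (hn : 1 ≤ n) (X : Fin n → Ω → ℝ)
    (hX2 : ∀ i, MemLp (X i) 2 μ) (hmean : ∀ i, ∫ ω, X i ω ∂μ = 0)
    (hassoc : IsAssociated μ X)
    (S : ℕ → Ω → ℝ)
    (hS : ∀ k ω, S k ω = ∑ i ∈ Finset.univ.filter (fun i : Fin n => (i : ℕ) < k), X i ω)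
    (M : Ω → ℝ) (hM : ∀ ω, M ω = (Finset.Icc 1 n).sup' (Finset.nonempty_Icc.mpr hn)
      (fun k => S k ω)) :
    ∫ ω, M ω ^ 2 ∂μ ≤ variance (S n) μ := by
  have hSn : S n = fun ω => tailSum (X · ω) 0 := by
    ext ω
    rw [hS, tailSum_zero, filter_true_of_mem fun i _ => i.is_lt]
  have hM2 : ∀ ω, M ω ^ 2 = S n ω ^ 2 + maxSqDefect (X · ω) 0 := fun ω => by
    rw [hM, hSn]
    simp_rw [hS]
    rw [sup'_sum_lt_eq_sum_sub_tailMin (X · ω) hn, maxSqDefect, tailSum_zero]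
    ring
  have hSn_mean : ∫ ω, S n ω ∂μ = 0 := by
    simp_rw [hSn, tailSum_zero]
    rw [integral_finsetSum _ fun i _ => (hX2 i).integrable one_le_two]
    simp [hmean]
  have hSn2 : MemLp (S n) 2 μ := hSn ▸ memLp_tailSum hX2 0
  calc ∫ ω, M ω ^ 2 ∂μ
      = ∫ ω, S n ω ^ 2 ∂μ + ∫ ω, maxSqDefect (X · ω) 0 ∂μ := by
        simp_rw [hM2]
        exact integral_add hSn2.integrable_sq (integrable_maxSqDefect hX2 0)
    _ ≤ ∫ ω, S n ω ^ 2 ∂μ := by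
        linarith [integral_maxSqDefect_nonpos hassoc hX2 hmean n.zero_le]
    _ = variance (S n) μ := (variance_of_integral_eq_zero hSn2.aemeasurable hSn_mean).symm

/-- Newman–Wright maximal inequality: for associated, mean-zero, finite-variance
`X₁, …, Xₙ` with partial sums `Sₖ` and `Mₙ = max(S₁, …, Sₙ)`, `E(Mₙ²) ≤ Var(Sₙ)`. -/
theorem newman_wright_maximal_inequality
    {Ω : Type*} [MeasurableSpace Ω] (μ : Measure Ω) [IsProbabilityMeasure μ]
    {n : ℕ} (hn : 1 ≤ n) (X : Fin n → Ω → ℝ) (hX : ∀ i, Measurable (X i))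
    (hX2 : ∀ i, MemLp (X i) 2 μ) (hmean : ∀ i, ∫ ω, X i ω ∂μ = 0)
    (hassoc : IsAssociated μ X)
    (S : ℕ → Ω → ℝ)
    (hS : ∀ k ω, S k ω = ∑ i ∈ Finset.univ.filter (fun i : Fin n => (i : ℕ) < k), X i ω)
    (M : Ω → ℝ) (hM : ∀ ω, M ω = (Finset.Icc 1 n).sup' (Finset.nonempty_Icc.mpr hn)
      (fun k => S k ω)) :
    ∫ ω, M ω ^ 2 ∂μ ≤ variance (S n) μ :=
  newman_wright_maximal_inequality_general μ hn X hX2 hmean hassoc S hS M hM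
end

section
/- Let X₁, X₂, … be associated, integrable, mean-zero random variables and let S₀ = 0 and Sₙ = X₁ + ⋯ + Xₙ. Then (Sₙ)_{n ≥ 1} is a demimartingale: for every j ≥ 1 and every coordinatewise nondecreasing measurable function g : ℝʲ → ℝ with (S_{j+1} − S_j)·g(S₁,…,S_j) integrable, E[(S_{j+1} − S_j)·g(S₁, …, S_j)] ≥ 0. -/
/-!
Since `S_{j+1} - S_j = X_j` has mean zero, `E[X_j g(S₁, …, S_j)]` is the covariance of `X_j` and
`g(S₁, …, S_j)`, and both are nondecreasing functions of the associated vector `(X₁, …, X_{j+1})`.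
Association only speaks about square-integrable functions, so both are first clipped to
`[-M, M]` and `[-N, N]`; dominated convergence then lets `M → ∞` and afterwards `N → ∞`.
-/

open MeasureTheory ProbabilityTheory Filter Topology Finset

def clip (M t : ℝ) : ℝ := max (-M) (min M t)

lemma monotone_clip (M : ℝ) : Monotone (clip M) :=
  fun _ _ h => max_le_max le_rfl (min_le_min le_rfl h)

lemma continuous_clip (M : ℝ) : Continuous (clip M) := by
  unfold clip; fun_prop

lemma abs_clip_le_abs_left (M t : ℝ) : |clip M t| ≤ |M| :=
  abs_le.2 ⟨le_max_of_le_left (neg_le_neg (le_abs_self M)),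
    max_le (neg_le_abs M) ((min_le_left M t).trans (le_abs_self M))⟩

lemma abs_clip_le_abs_right {M : ℝ} (hM : 0 ≤ M) (t : ℝ) : |clip M t| ≤ |t| :=
  abs_le.2 ⟨le_max_of_le_right (le_min ((neg_nonpos.2 (abs_nonneg t)).trans hM) (neg_abs_le t)),
    max_le ((neg_nonpos.2 hM).trans (abs_nonneg t)) ((min_le_right M t).trans (le_abs_self t))⟩

lemma clip_of_abs_le {M t : ℝ} (h : |t| ≤ M) : clip M t = t := by
  rw [clip, min_eq_right ((le_abs_self t).trans h),
    max_eq_right (neg_le.1 ((neg_le_abs t).trans h))]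

lemma tendsto_clip (t : ℝ) : Tendsto (fun M : ℕ => clip M t) atTop (𝓝 t) := by
  obtain ⟨M₀, hM₀⟩ := exists_nat_ge |t|
  refine tendsto_const_nhds.congr' ?_
  filter_upwards [eventually_ge_atTop M₀] with M hM
  exact (clip_of_abs_le (hM₀.trans (Nat.cast_le.2 hM))).symm

section

variable {Ω : Type*} [MeasurableSpace Ω] {μ : Measure Ω}

lemma tendsto_integral_clip_mul {X Z : Ω → ℝ} (hX : AEStronglyMeasurable X μ)
    (hZ : AEStronglyMeasurable Z μ) (hXZ : Integrable (fun ω => X ω * Z ω) μ) :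
    Tendsto (fun M : ℕ => ∫ ω, clip M (X ω) * Z ω ∂μ) atTop (𝓝 (∫ ω, X ω * Z ω ∂μ)) := by
  refine tendsto_integral_of_dominated_convergence _
    (fun M => ((continuous_clip M).comp_aestronglyMeasurable hX).mul hZ) hXZ.norm
    (fun M => ae_of_all _ fun ω => ?_) (ae_of_all _ fun ω => (tendsto_clip (X ω)).mul_const _)
  simp only [norm_mul, Real.norm_eq_abs]
  exact mul_le_mul_of_nonneg_right (abs_clip_le_abs_right M.cast_nonneg _) (abs_nonneg _)

lemma tendsto_integral_clip {X : Ω → ℝ} (hX : Integrable X μ) :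
    Tendsto (fun M : ℕ => ∫ ω, clip M (X ω) ∂μ) atTop (𝓝 (∫ ω, X ω ∂μ)) := by
  simpa using tendsto_integral_clip_mul hX.aestronglyMeasurable aestronglyMeasurable_const
    (hX.mul_const 1)

lemma integral_mul_nonneg_of_cov_clip_nonneg {X Y : Ω → ℝ} (hX : Integrable X μ)
    (hX0 : ∫ ω, X ω ∂μ = 0) (hY : AEStronglyMeasurable Y μ)
    (hXY : Integrable (fun ω => X ω * Y ω) μ)
    (hcov : ∀ M N : ℕ, 0 ≤ cov μ (fun ω => clip M (X ω)) (fun ω => clip N (Y ω))) :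
    0 ≤ ∫ ω, X ω * Y ω ∂μ := by
  have hclipY : ∀ N : ℕ, AEStronglyMeasurable (fun ω => clip N (Y ω)) μ :=
    fun N => (continuous_clip N).comp_aestronglyMeasurable hY
  have hN : ∀ N : ℕ, 0 ≤ ∫ ω, X ω * clip N (Y ω) ∂μ := by
    intro N
    have hXYN : Integrable (fun ω => X ω * clip N (Y ω)) μ :=
      hX.mul_bdd (hclipY N) (ae_of_all _ fun ω => abs_clip_le_abs_left _ _)
    have hlim := (tendsto_integral_clip_mul hX.aestronglyMeasurable (hclipY N) hXYN).sub
      ((tendsto_integral_clip hX).mul_const (∫ ω, clip N (Y ω) ∂μ))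
    rw [hX0, zero_mul, sub_zero] at hlim
    exact ge_of_tendsto' hlim (hcov · N)
  have hlim : Tendsto (fun N : ℕ => ∫ ω, X ω * clip N (Y ω) ∂μ) atTop
      (𝓝 (∫ ω, X ω * Y ω ∂μ)) := by
    simpa only [mul_comm (X _)] using
      tendsto_integral_clip_mul hY hX.aestronglyMeasurable (by simpa only [mul_comm] using hXY)
  exact ge_of_tendsto' hlim hN

lemma IsAssociated.cov_nonneg_of_bounded [IsFiniteMeasure μ] {n : ℕ} {X : Fin n → Ω → ℝ}
    (h : IsAssociated μ X) (hX : ∀ i, AEMeasurable (X i) μ) {f g : (Fin n → ℝ) → ℝ}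
    (hf : Monotone f) (hg : Monotone g) (hfm : Measurable f) (hgm : Measurable g) {C D : ℝ}
    (hfC : ∀ x, |f x| ≤ C) (hgD : ∀ x, |g x| ≤ D) :
    0 ≤ cov μ (fun ω => f fun i => X i ω) (fun ω => g fun i => X i ω) :=
  have hXm : AEMeasurable (fun ω i => X i ω) μ := aemeasurable_pi_lambda _ hX
  h f g hf hg hfm hgm
    (.of_bound (hfm.comp_aemeasurable hXm).aestronglyMeasurable C (ae_of_all _ fun _ => hfC _))
    (.of_bound (hgm.comp_aemeasurable hXm).aestronglyMeasurable D (ae_of_all _ fun _ => hgD _))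

lemma IsAssociated.cov_clip_nonneg [IsFiniteMeasure μ] {n : ℕ} {X : Fin n → Ω → ℝ}
    (h : IsAssociated μ X) (hX : ∀ i, AEMeasurable (X i) μ) {f g : (Fin n → ℝ) → ℝ}
    (hf : Monotone f) (hg : Monotone g) (hfm : Measurable f) (hgm : Measurable g) (M N : ℝ) :
    0 ≤ cov μ (fun ω => clip M (f fun i => X i ω)) (fun ω => clip N (g fun i => X i ω)) :=
  h.cov_nonneg_of_bounded hX ((monotone_clip M).comp hf) ((monotone_clip N).comp hg)
    ((continuous_clip M).measurable.comp hfm) ((continuous_clip N).measurable.comp hgm)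
    (fun _ => abs_clip_le_abs_left M _) (fun _ => abs_clip_le_abs_left N _)

end

def partialSums {α : Type*} [AddCommMonoid α] {n : ℕ} (x : Fin n → α) (i : Fin n) : α :=
  ∑ k ∈ Iic i, x k

lemma monotone_partialSums {α : Type*} [AddCommMonoid α] [PartialOrder α]
    [IsOrderedAddMonoid α] {n : ℕ} : Monotone (partialSums : (Fin n → α) → Fin n → α) :=
  fun _ _ h _ => sum_le_sum fun k _ => h k

lemma measurable_partialSums {α : Type*} [AddCommMonoid α] [MeasurableSpace α]
    [MeasurableAdd₂ α] {n : ℕ} : Measurable (partialSums : (Fin n → α) → Fin n → α) :=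
  measurable_pi_lambda _ fun _ => Finset.measurable_sum _ fun k _ => measurable_pi_apply k

lemma partialSums_eq_sum_range {α : Type*} [AddCommMonoid α] {n : ℕ} (x : ℕ → α) (i : Fin n) :
    partialSums (fun k : Fin n => x k) i = ∑ k ∈ range (i + 1), x k := by
  rw [partialSums, Nat.range_succ_eq_Iic, ← Fin.map_valEmbedding_Iic, sum_map]
  rfl

/-- Here `X i` stands for `X_{i+1}` and `S j ω = X₁ ω + ⋯ + X_j ω`. -/
theorem partial_sums_associated_demimartingale
    {Ω : Type*} [MeasurableSpace Ω] (μ : Measure Ω) [IsProbabilityMeasure μ]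
    (X : ℕ → Ω → ℝ) (hX : ∀ n, Measurable (X n)) (hint : ∀ n, Integrable (X n) μ)
    (hmean : ∀ n, ∫ ω, X n ω ∂μ = 0)
    (hassoc : ∀ n : ℕ, IsAssociated μ (fun i : Fin n => X (i : ℕ)))
    (S : ℕ → Ω → ℝ) (hS : ∀ j ω, S j ω = ∑ i ∈ Finset.range j, X i ω) :
    ∀ j : ℕ, 1 ≤ j → ∀ g : (Fin j → ℝ) → ℝ, Monotone g → Measurable g →
      Integrable (fun ω => (S (j + 1) ω - S j ω) * g (fun i => S ((i : ℕ) + 1) ω)) μ →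
      0 ≤ ∫ ω, (S (j + 1) ω - S j ω) * g (fun i => S ((i : ℕ) + 1) ω) ∂μ := by
  intro j _ g hg hgm hprod
  have hincr : ∀ ω, S (j + 1) ω - S j ω = X j ω := fun ω => by
    rw [hS, hS, sum_range_succ, add_sub_cancel_left]
  let φ : (Fin (j + 1) → ℝ) → Fin j → ℝ := fun x i => partialSums x i.castSucc
  have hφ : Monotone φ := fun _ _ h i => monotone_partialSums h i.castSucc
  have hφm : Measurable φ :=
    measurable_pi_lambda _ fun i => (measurable_pi_apply i.castSucc).comp measurable_partialSums
  have hY : ∀ ω, g (fun i : Fin j => S (i + 1) ω) = g (φ fun k => X k ω) := fun ω => by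
    congr 1
    funext i
    rw [hS]
    exact (partialSums_eq_sum_range (fun k => X k ω) i.castSucc).symm
  simp only [hincr, hY] at hprod ⊢
  refine integral_mul_nonneg_of_cov_clip_nonneg (hint j) (hmean j) ?_ hprod fun M N => ?_
  · exact (hgm.comp hφm).comp_aemeasurable
      (aemeasurable_pi_lambda _ fun k => (hX k).aemeasurable) |>.aestronglyMeasurable
  · exact (hassoc (j + 1)).cov_clip_nonneg (fun k => (hX k).aemeasurable)
      (Function.monotone_eval (Fin.last j)) (hg.comp hφ) (measurable_pi_apply _) (hgm.comp hφm) M N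
end
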